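/- arXiv:2006.01640 — 2 statements merged into one kernel-verified Lean document; each statement's English description precedes it below -/
import Mathlib

section
/- Consider X = ℝ with the Euclidean metric and the bornology 𝔅 generated by the base {(−x, x) : x > 0}. Then X has the 𝔅^s-Gerlits–Nagy property: X satisfies S₁(𝒪_{𝔅^s}, 𝒪_{𝔅^s}^{gp}), i.e., for every sequence (𝒰ₙ) of open 𝔅^s-covers of ℝ one can pick Uₙ ∈ 𝒰ₙ such that {Uₙ : n ∈ ℕ} is a 𝔅^s-groupable cover of ℝ. -/
def enl {α : Type*} [MetricSpace α] (B : Set α) (δ : ℝ) : Set α :=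
  ⋃ x ∈ B, Metric.ball x δ

def BsCover {α : Type*} [MetricSpace α] (𝔅 𝒰 : Set (Set α)) : Prop :=
  (∀ u ∈ 𝒰, IsOpen u) ∧ Set.univ ∉ 𝒰 ∧
    ∀ B ∈ 𝔅, ∃ u ∈ 𝒰, ∃ δ > 0, enl B δ ⊆ u

def BsGroupable {α : Type*} [MetricSpace α] (𝔅 𝒰 : Set (Set α)) : Prop :=
  (∀ u ∈ 𝒰, IsOpen u) ∧ ⋃₀ 𝒰 = Set.univ ∧
    ∃ V : ℕ → Set (Set α), (∀ n, (V n).Finite) ∧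
      (∀ m n, m ≠ n → Disjoint (V m) (V n)) ∧ (⋃ n, V n) = 𝒰 ∧
      ∀ B ∈ 𝔅, ∃ n₀ : ℕ, ∀ n ≥ n₀, ∃ δ > 0, ∃ u ∈ V n, enl B δ ⊆ u

def S1_GN {α : Type*} [MetricSpace α] (𝔅 : Set (Set α)) : Prop :=
  ∀ U : ℕ → Set (Set α), (∀ n, BsCover 𝔅 (U n)) →
    ∃ f : ℕ → Set α, (∀ n, f n ∈ U n) ∧ BsGroupable 𝔅 (Set.range f)

lemma enl_mono {B B' : Set ℝ} (h : B ⊆ B') (δ : ℝ) : enl B δ ⊆ enl B' δ := by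
  unfold enl; exact Set.biUnion_subset_biUnion_left h

lemma self_subset_enl {B : Set ℝ} {δ : ℝ} (hδ : 0 < δ) : B ⊆ enl B δ := by
  intro x hx
  exact Set.mem_biUnion hx (Metric.mem_ball_self hδ)

theorem stmt12 :
    S1_GN {B : Set ℝ | ∃ x : ℝ, 0 < x ∧ B ⊆ Set.Ioo (-x) x} := by
  intro U hU
  have hmem : ∀ n : ℕ, Set.Ioo (-(n+1:ℝ)) (n+1) ∈
      {B : Set ℝ | ∃ x : ℝ, 0 < x ∧ B ⊆ Set.Ioo (-x) x} :=
    fun n => ⟨n+1, by positivity, subset_rfl⟩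
  choose f hf δ hδ hsub using fun n => (hU n).2.2 _ (hmem n)
  have hopen : ∀ n, IsOpen (f n) := fun n => (hU n).1 _ (hf n)
  have hne : ∀ n, f n ≠ Set.univ := fun n h => (hU n).2.1 (h ▸ hf n)
  have hcov : ∀ n : ℕ, Set.Ioo (-(n+1:ℝ)) (n+1) ⊆ f n :=
    fun n => (self_subset_enl (hδ n)).trans (hsub n)
  -- each value is attained only finitely often
  have hfib : ∀ u : Set ℝ, {n | f n = u}.Finite := by
    intro u
    by_contra hinf
    have hinf : {n | f n = u}.Infinite := hinf
    have : u = Set.univ := by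
      ext y
      simp only [Set.mem_univ, iff_true]
      obtain ⟨n, hn, hny⟩ := hinf.exists_gt ⌈|y|⌉₊
      have hy : |y| < (n:ℝ) + 1 := by
        calc |y| ≤ ⌈|y|⌉₊ := Nat.le_ceil _
        _ < (n:ℝ) := by exact_mod_cast hny
        _ < n + 1 := by linarith
      have := hcov n ⟨by cases abs_lt.mp hy; linarith, by cases abs_lt.mp hy; linarith⟩
      rwa [hn] at this
    obtain ⟨n, hn⟩ := hinf.nonempty
    exact hne n (hn.trans this)
  -- new indices
  set N : Set ℕ := {n | ∀ j < n, f j ≠ f n} with hNdef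
  have hfirst : ∀ n : ℕ, ∃ j ∈ N, f j = f n := by
    classical
    intro n
    have hex : ∃ j, f j = f n := ⟨n, rfl⟩
    refine ⟨Nat.find hex, ?_, Nat.find_spec hex⟩
    intro i hi hcontra
    exact Nat.find_min hex hi (hcontra.trans (Nat.find_spec hex))
  have hNinf : N.Infinite := by
    by_contra hfin
    rw [Set.not_infinite] at hfin
    have hrange : Set.range f ⊆ f '' N := by
      rintro _ ⟨n, rfl⟩
      obtain ⟨j, hj, hje⟩ := hfirst n
      exact ⟨j, hj, hje⟩
    have hrfin : (Set.range f).Finite := (hfin.image f).subset hrange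
    have : (Set.univ : Set ℕ).Finite := by
      have : (Set.univ : Set ℕ) ⊆ ⋃ u ∈ Set.range f, {n | f n = u} := by
        intro n _
        exact Set.mem_biUnion ⟨n, rfl⟩ rfl
      exact (hrfin.biUnion fun u _ => hfib u).subset this
    exact Set.infinite_univ this
  have hNinf' : (setOf (fun n => n ∈ N)).Infinite := hNinf
  set m : ℕ → ℕ := Nat.nth (fun n => n ∈ N) with hmdef
  have hmmem : ∀ k, m k ∈ N := fun k => Nat.nth_mem_of_infinite hNinf' k
  have hmmono : StrictMono m := Nat.nth_strictMono hNinf'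
  have hm0 : m 0 = 0 := by
    rw [hmdef, Nat.nth_zero]
    exact Nat.sInf_eq_zero.mpr (Or.inl (fun j hj => absurd hj (Nat.not_lt_zero j)))
  have hmk : ∀ k, k ≤ m k := fun k => hmmono.le_apply
  -- injectivity on N
  have hinjN : ∀ i ∈ N, ∀ j ∈ N, f i = f j → i = j := by
    intro i hi j hj hij
    rcases lt_trichotomy i j with h | h | h
    · exact absurd hij (hj i h)
    · exact h
    · exact absurd hij.symm (hi j h)
  refine ⟨f, hf, fun u hu => ?_, ?_, ?_⟩
  · obtain ⟨n, rfl⟩ := hu; exact hopen n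
  · apply Set.eq_univ_of_forall
    intro y
    obtain ⟨n, hn⟩ := exists_nat_gt |y|
    have hy : |y| < (n:ℝ) + 1 := by linarith
    exact ⟨f n, ⟨n, rfl⟩,
      hcov n ⟨by cases abs_lt.mp hy; linarith, by cases abs_lt.mp hy; linarith⟩⟩
  · refine ⟨fun k => f '' (N ∩ Set.Ico (m k) (m (k+1))), ?_, ?_, ?_, ?_⟩
    · intro k
      exact ((Set.finite_Ico _ _).inter_of_right N).image f
    · intro k l hkl
      rw [Set.disjoint_left]
      rintro _ ⟨i, ⟨hiN, hik1, hik2⟩, rfl⟩ ⟨j, ⟨hjN, hjl1, hjl2⟩, hji⟩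
      have hij : i = j := hinjN i hiN j hjN hji.symm
      subst hij
      rcases lt_or_gt_of_ne hkl with h | h
      · have : m (k+1) ≤ m l := hmmono.le_iff_le.mpr h
        omega
      · have : m (l+1) ≤ m k := hmmono.le_iff_le.mpr h
        omega
    · apply Set.eq_of_subset_of_subset
      · intro a ha
        rw [Set.mem_iUnion] at ha
        obtain ⟨k, i, _, rfl⟩ := ha
        exact ⟨i, rfl⟩
      · rintro _ ⟨n, rfl⟩
        obtain ⟨j, hjN, hje⟩ := hfirst n
        set k := Nat.findGreatest (fun k => m k ≤ j) j with hkdef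
        have hP0 : m 0 ≤ j := by omega
        have hPk : m k ≤ j := Nat.findGreatest_spec (P := fun i => m i ≤ j) (m := 0) (Nat.zero_le j) hP0
        have hjlt : j < m (k+1) := by
          by_contra hle
          push_neg at hle
          have hk1 : k + 1 ≤ j := le_trans (hmk (k+1)) hle
          exact Nat.findGreatest_is_greatest (P := fun i => m i ≤ j) (Nat.lt_succ_self k) hk1 hle
        exact Set.mem_iUnion.mpr ⟨k, ⟨j, ⟨hjN, hPk, hjlt⟩, hje⟩⟩
    · rintro B ⟨x, hx, hBx⟩
      refine ⟨⌈x⌉₊, fun k hk => ?_⟩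
      refine ⟨δ (m k), hδ (m k), f (m k),
        ⟨m k, ⟨hmmem k, le_refl _, hmmono (Nat.lt_succ_self k)⟩, rfl⟩, ?_⟩
      have hxk : x ≤ (m k : ℝ) + 1 := by
        calc x ≤ ⌈x⌉₊ := Nat.le_ceil x
        _ ≤ (m k : ℝ) := by exact_mod_cast le_trans hk (hmk k)
        _ ≤ (m k : ℝ) + 1 := by linarith
      have hBsub : B ⊆ Set.Ioo (-((m k : ℝ)+1)) ((m k : ℝ)+1) := by
        refine hBx.trans ?_
        intro z hz
        exact ⟨by cases hz; linarith, by cases hz; linarith⟩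
      exact (enl_mono hBsub _).trans (hsub (m k))
end

section
/- Let 𝔅 be a bornology on a metric space X with a compact base 𝔅₀, and let X^n carry the max product metric and the bornology 𝔅ⁿ generated by {Bⁿ : B ∈ 𝔅}. If 𝒰 is an open (𝔅ⁿ)^s-cover of X^n, then there exists an open 𝔅^s-cover 𝒱 of X such that {V^n : V ∈ 𝒱} is an open (𝔅ⁿ)^s-cover of X^n refining 𝒰. -/
def IsBornologyOn {α : Type*} (𝔅 : Set (Set α)) : Prop :=
  (⋃₀ 𝔅 = Set.univ) ∧ (∀ B ∈ 𝔅, ∀ A ⊆ B, A ∈ 𝔅) ∧ (∀ A ∈ 𝔅, ∀ B ∈ 𝔅, A ∪ B ∈ 𝔅)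

def IsBaseFor {α : Type*} (𝔅 𝔅₀ : Set (Set α)) : Prop :=
  𝔅₀ ⊆ 𝔅 ∧ ∀ B ∈ 𝔅, ∃ B₀ ∈ 𝔅₀, B ⊆ B₀

def cube {α : Type*} (n : ℕ) (B : Set α) : Set (Fin n → α) := {y | ∀ i, y i ∈ B}

def bornPow {α : Type*} (n : ℕ) (𝔅 : Set (Set α)) : Set (Set (Fin n → α)) :=
  {C | ∃ B ∈ 𝔅, C ⊆ cube n B}

lemma enl_open {α : Type*} [MetricSpace α] (B : Set α) (δ : ℝ) : IsOpen (enl B δ) :=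
  isOpen_biUnion fun _ _ => Metric.isOpen_ball

lemma enl_mono_s13 {α : Type*} [MetricSpace α] {A B : Set α} (h : A ⊆ B) {δ γ : ℝ}
    (hδ : δ ≤ γ) : enl A δ ⊆ enl B γ := by
  intro y hy
  simp only [enl, Set.mem_iUnion] at hy ⊢
  obtain ⟨x, hx, hxy⟩ := hy
  exact ⟨x, h hx, lt_of_lt_of_le hxy hδ⟩

lemma cube_mono {α : Type*} {n : ℕ} {A B : Set α} (h : A ⊆ B) : cube n A ⊆ cube n B :=
  fun _ hy i => h (hy i)

lemma cube_open {α : Type*} [MetricSpace α] {n : ℕ} {V : Set α} (h : IsOpen V) :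
    IsOpen (cube n V) := by
  have : cube n V = Set.pi Set.univ (fun _ : Fin n => V) := by
    ext y; simp [cube, Set.mem_pi]
  rw [this]
  exact isOpen_set_pi Set.finite_univ fun _ _ => h

lemma enl_cube {α : Type*} [MetricSpace α] (n : ℕ) (B : Set α) {δ : ℝ} (hδ : 0 < δ) :
    enl (cube n B) δ = cube n (enl B δ) := by
  ext y
  constructor
  · rintro hy i
    simp only [enl, Set.mem_iUnion] at hy
    obtain ⟨x, hx, hxy⟩ := hy
    rw [Metric.mem_ball, dist_pi_lt_iff hδ] at hxy
    simp only [enl, Set.mem_iUnion]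
    exact ⟨x i, hx i, by simpa using hxy i⟩
  · intro hy
    have : ∀ i, ∃ x ∈ B, dist (y i) x < δ := by
      intro i
      have := hy i
      simp only [enl, Set.mem_iUnion, Metric.mem_ball] at this
      obtain ⟨x, hx, h⟩ := this
      exact ⟨x, hx, h⟩
    choose x hxB hxd using this
    simp only [enl, Set.mem_iUnion]
    exact ⟨x, fun i => hxB i, by rw [Metric.mem_ball, dist_pi_lt_iff hδ]; exact hxd⟩

theorem stmt13 {X : Type*} [MetricSpace X]
    (𝔅 𝔅₀ : Set (Set X)) (hb : IsBornologyOn 𝔅) (hbase : IsBaseFor 𝔅 𝔅₀)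
    (hcpt : ∀ B ∈ 𝔅₀, IsCompact B)
    (n : ℕ) (hn : 0 < n)
    (𝒰 : Set (Set (Fin n → X))) (hU : BsCover (bornPow n 𝔅) 𝒰) :
    ∃ 𝒱 : Set (Set X), BsCover 𝔅 𝒱 ∧
      BsCover (bornPow n 𝔅) ((cube n) '' 𝒱) ∧
      ∀ V ∈ 𝒱, ∃ U ∈ 𝒰, cube n V ⊆ U := by
  obtain ⟨hUo, hUuniv, hUcov⟩ := hU
  set 𝒱 : Set (Set X) :=
    {V | ∃ B₀ ∈ 𝔅₀, ∃ U ∈ 𝒰, ∃ δ > (0:ℝ), enl (cube n B₀) δ ⊆ U ∧ V = enl B₀ (δ/2)}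
    with h𝒱
  -- key: every V ∈ 𝒱 has cube n V inside some U ∈ 𝒰
  have hrefine : ∀ V ∈ 𝒱, ∃ U ∈ 𝒰, cube n V ⊆ U := by
    rintro V ⟨B₀, _, U, hUmem, δ, hδ, hsub, rfl⟩
    refine ⟨U, hUmem, ?_⟩
    rw [← enl_cube n B₀ (by linarith)]
    exact (enl_mono_s13 (le_refl _) (by linarith)).trans hsub
  -- V = univ impossible
  have hVnuniv : ∀ V ∈ 𝒱, V ≠ Set.univ := by
    intro V hV hVeq
    obtain ⟨U, hUmem, hsub⟩ := hrefine V hV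
    apply hUuniv
    have : cube n V = Set.univ := by
      rw [hVeq]; ext y; simp [cube]
    rw [this] at hsub
    rwa [Set.univ_subset_iff.mp hsub] at hUmem
  have hVopen : ∀ V ∈ 𝒱, IsOpen V := by
    rintro V ⟨B₀, _, U, _, δ, _, _, rfl⟩
    exact enl_open _ _
  -- coverage for 𝔅
  have hcov : ∀ B ∈ 𝔅, ∃ V ∈ 𝒱, ∃ γ > (0:ℝ), enl B γ ⊆ V := by
    intro B hB
    obtain ⟨B₀, hB₀, hBB₀⟩ := hbase.2 B hB
    have hcube : cube n B₀ ∈ bornPow n 𝔅 := ⟨B₀, hbase.1 hB₀, le_refl _⟩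
    obtain ⟨U, hUmem, δ, hδ, hsub⟩ := hUcov _ hcube
    refine ⟨enl B₀ (δ/2), ⟨B₀, hB₀, U, hUmem, δ, hδ, hsub, rfl⟩, δ/2, by linarith, ?_⟩
    exact enl_mono_s13 hBB₀ (le_refl _)
  refine ⟨𝒱, ⟨hVopen, ?_, hcov⟩, ⟨?_, ?_, ?_⟩, hrefine⟩
  · intro h
    exact hVnuniv _ h rfl
  · rintro _ ⟨V, hV, rfl⟩
    exact cube_open (hVopen V hV)
  · rintro ⟨V, hV, hVeq⟩
    apply hVnuniv V hV
    ext x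
    simp only [Set.mem_univ, iff_true]
    have : (fun _ : Fin n => x) ∈ cube n V := by rw [hVeq]; trivial
    exact this ⟨0, hn⟩
  · rintro C ⟨B, hB, hCB⟩
    obtain ⟨B₀, hB₀, hBB₀⟩ := hbase.2 B hB
    have hcube : cube n B₀ ∈ bornPow n 𝔅 := ⟨B₀, hbase.1 hB₀, le_refl _⟩
    obtain ⟨U, hUmem, δ, hδ, hsub⟩ := hUcov _ hcube
    refine ⟨cube n (enl B₀ (δ/2)),
      ⟨enl B₀ (δ/2), ⟨B₀, hB₀, U, hUmem, δ, hδ, hsub, rfl⟩, rfl⟩, δ/2, by linarith, ?_⟩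
    rw [← enl_cube n B₀ (by linarith)]
    exact enl_mono_s13 (hCB.trans (cube_mono hBB₀)) (le_refl _)
end
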